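/- arXiv:2303.10889 — 3 statements merged into one kernel-verified Lean document; each statement's English description precedes it below -/
import Mathlib

section
/- Let D be a rich domain that is a decomposable domain. Then for each s ∈ M, the graph G_≈^{A^s} — whose vertices are the elements of A^s and whose edges join strongly connected elements of the induced marginal domain [D]^s — is a connected graph. -/
noncomputable section

universe u

/-- A (strict) preference: a complete, antisymmetric, transitive binary relation,
i.e. a strict linear order, on `α`.  `rel a b` reads "`a` is strictly preferred to `b`". -/
structure Pref (α : Type u) : Type u where
  rel : α → α → Prop
  asymm : ∀ a b, rel a b → ¬ rel b a
  trans : ∀ a b c, rel a b → rel b c → rel a c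
  total : ∀ a b, a ≠ b → rel a b ∨ rel b a

namespace Pref

variable {α : Type u}

theorem exists_top [Finite α] [Nonempty α] (P : Pref α) :
    ∃ a : α, ∀ b, b ≠ a → P.rel a b := by
  haveI : IsTrans α P.rel := ⟨P.trans⟩
  haveI : IsIrrefl α P.rel := ⟨fun a h => P.asymm a a h h⟩
  obtain ⟨a, -, ha⟩ :=
    (Finite.wellFounded_of_trans_of_irrefl P.rel).has_min Set.univ
      ⟨Classical.arbitrary α, trivial⟩
  refine ⟨a, fun b hb => ?_⟩
  rcases P.total a b (fun h => hb h.symm) with h | h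
  · exact h
  · exact absurd h (ha b trivial)

/-- The top-ranked alternative `r₁(P)` of a preference. -/
def top [Finite α] [Nonempty α] (P : Pref α) : α := P.exists_top.choose

theorem top_spec [Finite α] [Nonempty α] (P : Pref α) :
    ∀ b, b ≠ P.top → P.rel P.top b := P.exists_top.choose_spec

/-- `rank P a = k` means that `a` is the `k`-th ranked alternative `r_k(P)`. -/
def rank (P : Pref α) (a : α) : ℕ := {b | P.rel b a}.ncard + 1

/-- The induced marginal preference `[P]^s` on component `s`:
derived from `P` by referring to the off-`s` components of the top alternative. -/
def marg {m : ℕ} {A : Fin m → Type u} [∀ s, Fintype (A s)] [∀ s, Nonempty (A s)]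
    (P : Pref (∀ s, A s)) (s : Fin m) : Pref (A s) where
  rel x y := P.rel (Function.update P.top s x) (Function.update P.top s y)
  asymm _ _ h := P.asymm _ _ h
  trans _ _ _ h₁ h₂ := P.trans _ _ _ h₁ h₂
  total x y hxy := P.total _ _ fun h => hxy (by
    have := congrFun h s
    simpa using this)

end Pref

section SocialChoice

variable {m : ℕ} {A : Fin m → Type u}

/-- `a` and `b` are similar, differing exactly in component `s`: `M(a,b) = {s}`. -/
def SimilarAt (a b : ∀ s, A s) (s : Fin m) : Prop :=
  a s ≠ b s ∧ ∀ t, t ≠ s → a t = b t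

/-- The "slice" `(A^s, x^{-s})` of alternatives agreeing with `x` off component `s`. -/
def Slice (s : Fin m) (x : ∀ t, A t) : Set (∀ t, A t) :=
  {a | ∀ t, t ≠ s → a t = x t}

variable [∀ s, Fintype (A s)] [∀ s, Nonempty (A s)]

/-- The induced marginal domain `[D]^s`. -/
def margDomain (D : Set (Pref (∀ s, A s))) (s : Fin m) : Set (Pref (A s)) :=
  (fun P => Pref.marg P s) '' D

/-- A preference is minimal-richness witnessed: every alternative is some preference's top. -/
def MinimallyRich (D : Set (Pref (∀ s, A s))) : Prop :=
  ∀ a : ∀ s, A s, ∃ P ∈ D, Pref.top P = a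

/-- A separable preference. -/
def Separable (P : Pref (∀ s, A s)) : Prop :=
  ∃ Q : ∀ s, Pref (A s), ∀ (s : Fin m) (a b : ∀ t, A t),
    SimilarAt a b s → (Q s).rel (a s) (b s) → P.rel a b

/-- A top-separable preference. -/
def TopSeparable (P : Pref (∀ s, A s)) : Prop :=
  ∀ (s : Fin m) (a b : ∀ t, A t), SimilarAt a b s → a s = Pref.top P s → P.rel a b

end SocialChoice

/-- Two preferences are complete reversals. -/
def CompleteReversals {α : Type u} (P P' : Pref α) : Prop :=
  ∀ a b, P.rel a b ↔ P'.rel b a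

section SCFProps

variable {β : Type u}

/-- Unanimity of a (marginal) social choice function on domain `E`. -/
def Unanimous [Finite β] [Nonempty β] (E : Set (Pref β)) {n : ℕ}
    (f : (Fin n → E) → β) : Prop :=
  ∀ (p : Fin n → E) (a : β), (∀ i, Pref.top (p i).1 = a) → f p = a

/-- Strategy-proofness of a (marginal) social choice function on domain `E`. -/
def StrategyProof (E : Set (Pref β)) {n : ℕ} (f : (Fin n → E) → β) : Prop :=
  ∀ (p : Fin n → E) (i : Fin n) (Q : E),
    f p ≠ f (Function.update p i Q) →
    (p i).1.rel (f p) (f (Function.update p i Q))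

/-- The tops-only property. -/
def TopsOnly [Finite β] [Nonempty β] (E : Set (Pref β)) {n : ℕ}
    (f : (Fin n → E) → β) : Prop :=
  ∀ p p' : Fin n → E, (∀ i, Pref.top (p i).1 = Pref.top (p' i).1) → f p = f p'

end SCFProps

section Decomp

variable {m : ℕ} {A : Fin m → Type u} [∀ s, Fintype (A s)] [∀ s, Nonempty (A s)]

/-- The profile of induced marginal preferences `([P₁]^s, …, [Pₙ]^s)`. -/
def margProfile (D : Set (Pref (∀ s, A s))) (s : Fin m) {n : ℕ}
    (p : Fin n → D) : Fin n → (margDomain D s) :=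
  fun i => ⟨Pref.marg (p i).1 s, ⟨(p i).1, (p i).2, rfl⟩⟩

/-- `f` is decomposed by the family of marginal SCFs `g`. -/
def Decomposable (D : Set (Pref (∀ s, A s))) {n : ℕ}
    (f : (Fin n → D) → (∀ s, A s))
    (g : ∀ s : Fin m, (Fin n → (margDomain D s)) → A s) : Prop :=
  ∀ p : Fin n → D, ∀ s, f p s = g s (margProfile D s p)

/-- A decomposable domain: for every `n ≥ 2` and every SCF, being a strategy-proof
unanimous rule is equivalent to being decomposable into strategy-proof unanimous
marginal rules. -/
def DecomposableDomain (D : Set (Pref (∀ s, A s))) : Prop :=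
  ∀ n : ℕ, 2 ≤ n → ∀ f : (Fin n → D) → (∀ s, A s),
    (Unanimous D f ∧ StrategyProof D f) ↔
      ∃ g : ∀ s : Fin m, (Fin n → (margDomain D s)) → A s,
        Decomposable D f g ∧
        ∀ s, Unanimous (margDomain D s) (g s) ∧ StrategyProof (margDomain D s) (g s)

/-- Diversity⁺: `D` contains two separable preferences that are complete reversals. -/
def DiversityPlus (D : Set (Pref (∀ s, A s))) : Prop :=
  ∃ P ∈ D, ∃ P' ∈ D, Separable P ∧ Separable P' ∧ CompleteReversals P P'

end Decomp

/-- Adjacency of two preferences: they coincide except that two alternatives ranked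
consecutively in `P` occupy the same two positions in reversed order in `P'`. -/
def Adjacent {β : Type u} (P P' : Pref β) : Prop :=
  ∃ a b : β, a ≠ b ∧
    P.rank b = P.rank a + 1 ∧ P'.rank b = P.rank a ∧ P'.rank a = P.rank a + 1 ∧
    ∀ c, c ≠ a → c ≠ b → P.rank c = P'.rank c

section AdjPlus

variable {m : ℕ} {A : Fin m → Type u} [∀ s, Fintype (A s)] [∀ s, Nonempty (A s)]

/-- Adjacency⁺ of two (separable) preferences. -/
def AdjacentPlus (P P' : Pref (∀ s, A s)) : Prop :=
  Separable P ∧ Separable P' ∧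
  ∃ (s : Fin m) (a b : A s), a ≠ b ∧
    (∀ z : ∀ t, A t,
      P.rank (Function.update z s b) = P.rank (Function.update z s a) + 1 ∧
      P'.rank (Function.update z s b) = P.rank (Function.update z s a) ∧
      P'.rank (Function.update z s a) = P.rank (Function.update z s a) + 1) ∧
    ∀ c : ∀ t, A t, c s ≠ a → c s ≠ b → P.rank c = P'.rank c

/-- Edges of the graph `G_{~/~⁺}`: adjacency or adjacency⁺. -/
def AdjEdge (P P' : Pref (∀ s, A s)) : Prop :=
  Adjacent P P' ∨ AdjacentPlus P P'

end AdjPlus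

/-- A path in a graph with edge relation `edge` and vertex set `S`, connecting `x` to `y`. -/
def IsPath {β : Type u} (edge : β → β → Prop) (S : Set β) (x y : β)
    (l : List β) : Prop :=
  2 ≤ l.length ∧ l.Nodup ∧ l.head? = some x ∧ l.getLast? = some y ∧
    (∀ z ∈ l, z ∈ S) ∧ List.Chain' edge l

/-- A path of preferences has `{a,b}`-restoration if the relative ranking of `a` and `b`
flips more than once along the path. -/
def HasRestoration {β : Type u} (l : List (Pref β)) (a b : β) : Prop :=
  ∃ o p q : Fin l.length, o < p ∧ p < q ∧
    (((l.get o).rel a b ∧ (l.get p).rel b a ∧ (l.get q).rel a b) ∨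
     ((l.get o).rel b a ∧ (l.get p).rel a b ∧ (l.get q).rel b a))

section RichDom

variable {m : ℕ} {A : Fin m → Type u} [∀ s, Fintype (A s)] [∀ s, Nonempty (A s)]

/-- The Interior⁺ property. -/
def InteriorPlus (D : Set (Pref (∀ s, A s))) : Prop :=
  ∀ P ∈ D, ∀ P' ∈ D, P ≠ P' → Pref.top P = Pref.top P' →
    ∃ l : List (Pref (∀ s, A s)),
      IsPath AdjEdge D P P' l ∧ ∀ Q ∈ l, Pref.top Q = Pref.top P

/-- The Exterior⁺ property (including the no-detour condition). -/
def ExteriorPlus (D : Set (Pref (∀ s, A s))) : Prop :=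
  ∀ P ∈ D, ∀ P' ∈ D, Pref.top P ≠ Pref.top P' →
    (∀ a b : ∀ s, A s, ∃ l : List (Pref (∀ s, A s)),
        IsPath AdjEdge D P P' l ∧ ¬ HasRestoration l a b) ∧
    ∀ s : Fin m, SimilarAt (Pref.top P) (Pref.top P') s →
      ∃ l : List (Pref (∀ s, A s)),
        IsPath AdjEdge D P P' l ∧ ∀ Q ∈ l, ∀ t, t ≠ s → Pref.top Q t = Pref.top P t

/-- A rich domain: minimally rich, diversity⁺, Interior⁺ and Exterior⁺. -/
def RichDomain (D : Set (Pref (∀ s, A s))) : Prop :=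
  MinimallyRich D ∧ DiversityPlus D ∧ InteriorPlus D ∧ ExteriorPlus D

end RichDom

/-- The weak interval `⟨x,y⟩` w.r.t. a linear order. -/
def wInterval {β : Type u} (lin : LinearOrder β) (x y : β) : Set β :=
  {z | (lin.le x z ∧ lin.le z y) ∨ (lin.le y z ∧ lin.le z x)}

/-- The strict (open) interval `Int⟨x,y⟩` w.r.t. a linear order. -/
def sInterval {β : Type u} (lin : LinearOrder β) (x y : β) : Set β :=
  {z | (lin.lt x z ∧ lin.lt z y) ∨ (lin.lt y z ∧ lin.lt z x)}

/-- `x` and `y` are marginal thresholds w.r.t. `lin`. -/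
def MarginalThresholds {β : Type u} (lin : LinearOrder β) (x y : β) : Prop :=
  x = y ∨ (x ≠ y ∧ 3 ≤ (wInterval lin x y).ncard)

/-- `x` and `y` are strongly connected in the marginal domain `E`: `x ≈ y`. -/
def StronglyConnected {β : Type u} (E : Set (Pref β)) (x y : β) : Prop :=
  ∃ Q ∈ E, ∃ Q' ∈ E,
    Pref.rank Q x = 1 ∧ Pref.rank Q y = 2 ∧ Pref.rank Q' y = 1 ∧ Pref.rank Q' x = 2 ∧
    ∀ z, z ≠ x → z ≠ y → Pref.rank Q z = Pref.rank Q' z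

/-- Edges of the graph `G_≈`. -/
def scEdge {β : Type u} (E : Set (Pref β)) (x y : β) : Prop :=
  x ≠ y ∧ StronglyConnected E x y

/-- The graph with edge relation `edge` on vertex set `B` is connected. -/
def GraphConnectedOn {β : Type u} (edge : β → β → Prop) (B : Set β) : Prop :=
  ∀ x ∈ B, ∀ y ∈ B, x ≠ y → ∃ l : List β, IsPath edge B x y l

/-- `v` is a leaf of the graph with edge relation `edge` on vertex set `B`:
it has a unique neighbor. -/
def IsLeaf {β : Type u} (edge : β → β → Prop) (B : Set β) (v : β) : Prop :=
  v ∈ B ∧ ∃! w, w ∈ B ∧ edge v w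

/-- A hybrid marginal preference on `lin` w.r.t. marginal thresholds `ylo`, `yhi`. -/
def HybridPref {β : Type u} [Finite β] [Nonempty β] (lin : LinearOrder β)
    (ylo yhi : β) (Q : Pref β) : Prop :=
  ∀ a b : β, a ≠ b → a ∈ sInterval lin (Pref.top Q) b →
    a ∉ sInterval lin ylo yhi → Q.rel a b

section MDH

variable {m : ℕ} {A : Fin m → Type u} [∀ s, Fintype (A s)] [∀ s, Nonempty (A s)]

/-- `xlo` and `xhi` are thresholds: marginal thresholds on every component. -/
def Thresholds (prec : ∀ s, LinearOrder (A s)) (xlo xhi : ∀ s, A s) : Prop :=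
  ∀ s, MarginalThresholds (prec s) (xlo s) (xhi s)

/-- A multidimensional hybrid preference on `≺ = ∏ prec s` w.r.t. thresholds `xlo`, `xhi`. -/
def MDHybrid (prec : ∀ s, LinearOrder (A s)) (xlo xhi : ∀ s, A s)
    (P : Pref (∀ s, A s)) : Prop :=
  ∀ (s : Fin m) (a b : ∀ t, A t), SimilarAt a b s →
    (a s = Pref.top P s → P.rel a b) ∧
    (a s ∈ sInterval (prec s) (Pref.top P s) (b s) →
      a s ∉ sInterval (prec s) (xlo s) (xhi s) → P.rel a b)

/-- A multidimensional single-peaked preference on `≺ = ∏ prec s`. -/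
def MSP (prec : ∀ s, LinearOrder (A s)) (P : Pref (∀ s, A s)) : Prop :=
  ∀ (s : Fin m) (a b : ∀ t, A t), SimilarAt a b s →
    a s ∈ wInterval (prec s) (Pref.top P s) (b s) → P.rel a b

/-- A multidimensional hybrid domain on `≺` w.r.t. thresholds `xlo`, `xhi`. -/
def MDHybridDomain (D : Set (Pref (∀ s, A s))) (prec : ∀ s, LinearOrder (A s))
    (xlo xhi : ∀ s, A s) : Prop :=
  Thresholds prec xlo xhi ∧
  (∀ P ∈ D, MDHybrid prec xlo xhi P) ∧
  ∀ s, GraphConnectedOn (scEdge (margDomain D s)) Set.univ ∧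
    (xlo s ≠ xhi s →
      ∀ v, ¬ IsLeaf (scEdge (margDomain D s)) (wInterval (prec s) (xlo s) (xhi s)) v)

/-- Strong connectedness⁺ of two alternatives: `a ≈⁺ b`. -/
def SCPlus (D : Set (Pref (∀ s, A s))) (a b : ∀ s, A s) : Prop :=
  ∃ P ∈ D, ∃ P' ∈ D, Pref.top P = a ∧ Pref.top P' = b ∧ AdjacentPlus P P'

end MDH

/-- The outcome of the fixed-ballot formula
`max_{J ⊆ N} ( min_{i ∈ J} ( r₁(Qᵢ), b_J ) )`. -/
def fbrValue {β : Type u} (lin : LinearOrder β) {n : ℕ} [Fintype β]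
    (bal : Finset (Fin n) → β) (tops : Fin n → β) : β :=
  letI := lin
  letI : DecidableEq β := lin.toDecidableEq
  Finset.univ.sup' ⟨∅, Finset.mem_univ _⟩
    fun J : Finset (Fin n) =>
      (insert (bal J) (J.image tops)).inf' (Finset.insert_nonempty _ _) id

/-- Fixed ballots: ballot unanimity and monotonicity. -/
def FBRBallots {β : Type u} [Fintype β] [Nonempty β] (lin : LinearOrder β) {n : ℕ}
    (bal : Finset (Fin n) → β) : Prop :=
  bal ∅ = @Finset.min' β lin Finset.univ Finset.univ_nonempty ∧
  bal Finset.univ = @Finset.max' β lin Finset.univ Finset.univ_nonempty ∧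
  ∀ J J' : Finset (Fin n), J ⊂ J' → lin.le (bal J) (bal J')

/-- A fixed ballot rule (FBR) on the linear order `lin`. -/
def IsFBR {β : Type u} [Fintype β] [Nonempty β] (lin : LinearOrder β)
    (E : Set (Pref β)) {n : ℕ} (f : (Fin n → E) → β) : Prop :=
  ∃ bal : Finset (Fin n) → β, FBRBallots lin bal ∧
    ∀ p : Fin n → E, f p = fbrValue lin bal fun i => Pref.top (p i).1

/-- An `(xlo, xhi)`-FBR: an FBR that additionally satisfies the
constrained-dictatorship condition. -/
def IsConstrainedFBR {β : Type u} [Fintype β] [Nonempty β] (lin : LinearOrder β)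
    (xlo xhi : β) (E : Set (Pref β)) {n : ℕ} (f : (Fin n → E) → β) : Prop :=
  ∃ bal : Finset (Fin n) → β, FBRBallots lin bal ∧
    (∀ p : Fin n → E, f p = fbrValue lin bal fun i => Pref.top (p i).1) ∧
    ∃ i : Fin n, ∀ J : Finset (Fin n),
      (i ∈ J → lin.le xhi (bal J)) ∧ (i ∉ J → lin.le (bal J) xlo)

/-!
Exterior⁺ with the no-detour condition joins two preferences whose tops differ only in
component `s` by a path of adjacent / adjacent⁺ preferences whose tops all lie in the slice
`(A^s, x^{-s})`. Along an edge of that path whose tops differ, the two preferences must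
swap their two top alternatives and agree on every other rank, so their induced marginals
on `A^s` swap their two tops as well: the two marginal tops are strongly connected.
Following the path, the `s`-components of the tops therefore walk through `G_≈^{A^s}`.
-/

namespace Pref

variable {α : Type u}

theorem one_le_rank (P : Pref α) (a : α) : 1 ≤ P.rank a := Nat.le_add_left 1 _

theorem rank_lt_of_rel [Finite α] (P : Pref α) {a b : α} (h : P.rel a b) :
    P.rank a < P.rank b := by
  have hsub : {c | P.rel c a} ⊂ {c | P.rel c b} :=
    (Set.ssubset_iff_of_subset fun c hc => P.trans c a b hc h).2
      ⟨a, h, fun h' => P.asymm a a h' h'⟩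
  have := Set.ncard_lt_ncard hsub (Set.toFinite _)
  simp only [rank]
  omega

theorem rel_iff_rank_lt [Finite α] (P : Pref α) {a b : α} :
    P.rel a b ↔ P.rank a < P.rank b := by
  refine ⟨P.rank_lt_of_rel, fun h => ?_⟩
  have hne : a ≠ b := by rintro rfl; exact lt_irrefl _ h
  exact (P.total a b hne).resolve_right fun h' => (P.rank_lt_of_rel h').not_gt h

theorem rank_injective [Finite α] (P : Pref α) : Function.Injective P.rank := by
  intro a b h
  by_contra hne
  rcases P.total a b hne with h' | h' <;> have := P.rank_lt_of_rel h' <;> omega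

theorem eq_top_of_forall_rel [Finite α] [Nonempty α] (P : Pref α) {a : α}
    (h : ∀ b, b ≠ a → P.rel a b) : a = P.top := by
  by_contra hne
  exact P.asymm _ _ (h _ (Ne.symm hne)) (P.top_spec a hne)

theorem rank_top [Finite α] [Nonempty α] (P : Pref α) : P.rank P.top = 1 := by
  have hempty : {b | P.rel b P.top} = ∅ := by
    ext b
    simp only [Set.mem_ofPred_eq, Set.mem_empty_iff_false, iff_false]
    intro hb
    rcases eq_or_ne b P.top with rfl | hne
    · exact P.asymm _ _ hb hb
    · exact P.asymm _ _ (P.top_spec b hne) hb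
  simp [rank, hempty]

theorem rank_eq_one_iff [Finite α] [Nonempty α] (P : Pref α) {a : α} :
    P.rank a = 1 ↔ a = P.top :=
  ⟨fun h => P.rank_injective (h.trans P.rank_top.symm), fun h => h ▸ P.rank_top⟩

end Pref

section Slice

variable {m : ℕ} {A : Fin m → Type u}

theorem update_eq_update_of_mem_slice {s : Fin m} {x y : ∀ t, A t} (h : y ∈ Slice s x)
    (e : A s) : Function.update y s e = Function.update x s e := by
  funext t
  rcases eq_or_ne t s with rfl | ht
  · simp
  · simp [Function.update_of_ne ht, h t ht]

theorem update_eq_of_mem_slice {s : Fin m} {x y : ∀ t, A t} (h : y ∈ Slice s x) :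
    Function.update x s (y s) = y := by
  rw [← update_eq_update_of_mem_slice h, Function.update_eq_self]

theorem mem_slice_comm {s : Fin m} {x y : ∀ t, A t} (h : y ∈ Slice s x) : x ∈ Slice s y :=
  fun t ht => (h t ht).symm

end Slice

section Marginal

variable {m : ℕ} {A : Fin m → Type u} [∀ s, Fintype (A s)] [∀ s, Nonempty (A s)]

namespace Pref

theorem marg_top (P : Pref (∀ s, A s)) (s : Fin m) : (P.marg s).top = P.top s := by
  refine ((P.marg s).eq_top_of_forall_rel fun d hd => ?_).symm
  show P.rel (Function.update P.top s (P.top s)) (Function.update P.top s d)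
  rw [Function.update_eq_self]
  exact P.top_spec _ fun h => hd (by simpa using congrFun h s)

theorem marg_rank_le (P : Pref (∀ s, A s)) (s : Fin m) (d : A s) :
    (P.marg s).rank d ≤ P.rank (Function.update P.top s d) := by
  have := Set.ncard_le_ncard_of_injOn (Function.update P.top s)
    (s := {e | (P.marg s).rel e d}) (t := {c | P.rel c (Function.update P.top s d)})
    (fun e he => he) (Function.update_injective _ s).injOn
  simp only [rank]
  omega

theorem marg_rank_eq_two (P : Pref (∀ s, A s)) {s : Fin m} {b : ∀ t, A t}
    (hb : b ∈ Slice s P.top) (hs : b s ≠ P.top s) (h2 : P.rank b = 2) :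
    (P.marg s).rank (b s) = 2 := by
  have hle := P.marg_rank_le s (b s)
  rw [update_eq_of_mem_slice hb, h2] at hle
  have hne : (P.marg s).rank (b s) ≠ 1 := by
    rw [Ne, rank_eq_one_iff, marg_top]; exact hs
  have := (P.marg s).one_le_rank (b s)
  omega

end Pref

theorem scEdge_marg_of_swap_tops {D : Set (Pref (∀ s, A s))} {s : Fin m}
    {P P' : Pref (∀ s, A s)} (hP : P ∈ D) (hP' : P' ∈ D) (hslice : P'.top ∈ Slice s P.top)
    (hs : P.top s ≠ P'.top s) (h2 : P.rank P'.top = 2) (h2' : P'.rank P.top = 2)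
    (hrank : ∀ d, d ≠ P.top s → d ≠ P'.top s →
      P.rank (Function.update P.top s d) = P'.rank (Function.update P.top s d)) :
    scEdge (margDomain D s) (P.top s) (P'.top s) := by
  have hupd' : ∀ e, Function.update P'.top s e = Function.update P.top s e :=
    update_eq_update_of_mem_slice hslice
  have hrest : ∀ d, d ≠ P.top s → d ≠ P'.top s → (P.marg s).rank d = (P'.marg s).rank d := by
    intro d hda hdb
    have hd := hrank d hda hdb
    have hd3 : 3 ≤ P.rank (Function.update P.top s d) := by
      have h1 : P.rank (Function.update P.top s d) ≠ 1 := by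
        rw [Ne, P.rank_eq_one_iff]; intro h; exact hda (by simpa using congrFun h s)
      have h2 : P.rank (Function.update P.top s d) ≠ P.rank P'.top := fun h =>
        hdb (by simpa using congrFun (P.rank_injective h) s)
      have := P.one_le_rank (Function.update P.top s d)
      omega
    simp only [Pref.rank]
    congr 2
    ext e
    show P.rel (Function.update P.top s e) (Function.update P.top s d) ↔
      P'.rel (Function.update P'.top s e) (Function.update P'.top s d)
    rw [hupd', hupd', P.rel_iff_rank_lt, P'.rel_iff_rank_lt, ← hd]
    -- the two tops have ranks `{1, 2}` in both preferences, below the common rank `≥ 3` of `d`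
    rcases eq_or_ne e (P.top s) with rfl | hea
    · rw [Function.update_eq_self, P.rank_top, h2']; omega
    rcases eq_or_ne e (P'.top s) with rfl | heb
    · rw [update_eq_of_mem_slice hslice, h2, P'.rank_top]; omega
    rw [hrank e hea heb]
  refine ⟨hs, P.marg s, ⟨P, hP, rfl⟩, P'.marg s, ⟨P', hP', rfl⟩, ?_, ?_, ?_, ?_, hrest⟩
  · rw [← Pref.marg_top]; exact Pref.rank_top _
  · exact P.marg_rank_eq_two hslice (Ne.symm hs) h2
  · rw [← Pref.marg_top]; exact Pref.rank_top _
  · exact P'.marg_rank_eq_two (mem_slice_comm hslice) hs h2'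

end Marginal

theorem Adjacent.swap_tops {β : Type u} [Finite β] [Nonempty β] {P P' : Pref β}
    (h : Adjacent P P') (hne : P.top ≠ P'.top) :
    P.rank P'.top = 2 ∧ P'.rank P.top = 2 ∧
      ∀ c, c ≠ P.top → c ≠ P'.top → P.rank c = P'.rank c := by
  obtain ⟨a, b, -, h1, h2, h3, hrest⟩ := h
  have ha : a = P.top := by
    by_contra ha
    by_cases hb : P.top = b
    · rw [← hb, P.rank_top] at h1
      have := P.one_le_rank a
      omega
    · exact hne (P'.rank_eq_one_iff.1 ((hrest _ (Ne.symm ha) hb).symm.trans P.rank_top))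
  subst ha
  rw [P.rank_top] at h1 h2 h3
  obtain rfl : b = P'.top := P'.rank_eq_one_iff.1 h2
  exact ⟨h1, h3, hrest⟩

section AdjEdge

variable {m : ℕ} {A : Fin m → Type u} [∀ s, Fintype (A s)] [∀ s, Nonempty (A s)]

theorem AdjacentPlus.swap_tops {s : Fin m} {P P' : Pref (∀ s, A s)} (h : AdjacentPlus P P')
    (hslice : P'.top ∈ Slice s P.top) (hs : P.top s ≠ P'.top s) :
    P.rank P'.top = 2 ∧ P'.rank P.top = 2 ∧
      ∀ c : ∀ t, A t, c s ≠ P.top s → c s ≠ P'.top s → P.rank c = P'.rank c := by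
  obtain ⟨-, -, t, a, b, hab, hswap, hrest⟩ := h
  have hta : P.top t = a := by
    by_contra hta
    by_cases htb : P.top t = b
    · have h1 := (hswap P.top).1
      rw [← htb, Function.update_eq_self, P.rank_top] at h1
      have := P.one_le_rank (Function.update P.top t a)
      omega
    · exact hs (congrFun (P'.rank_eq_one_iff.1
        ((hrest _ hta htb).symm.trans P.rank_top)) s)
  obtain ⟨h1, h2, h3⟩ := hswap P.top
  rw [← hta, Function.update_eq_self, P.rank_top] at h1 h2 h3
  have hb : Function.update P.top t b = P'.top := P'.rank_eq_one_iff.1 h2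
  obtain rfl : t = s := by
    by_contra hts
    have := hslice t hts
    rw [← hb, Function.update_self] at this
    exact hab (hta ▸ this.symm)
  have htb : P'.top t = b := by rw [← hb, Function.update_self]
  exact ⟨hb ▸ h1, h3, fun c hca hcb => hrest c (hta ▸ hca) (htb ▸ hcb)⟩

theorem AdjEdge.scEdge_marg {D : Set (Pref (∀ s, A s))} {s : Fin m} {P P' : Pref (∀ s, A s)}
    (hP : P ∈ D) (hP' : P' ∈ D) (h : AdjEdge P P') (hslice : P'.top ∈ Slice s P.top)
    (hs : P.top s ≠ P'.top s) :
    scEdge (margDomain D s) (P.top s) (P'.top s) := by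
  obtain ⟨h2, h2', hrank⟩ : P.rank P'.top = 2 ∧ P'.rank P.top = 2 ∧
      ∀ c : ∀ t, A t, c s ≠ P.top s → c s ≠ P'.top s → P.rank c = P'.rank c := by
    rcases h with h | h
    · obtain ⟨h2, h2', hrank⟩ := h.swap_tops fun h => hs (congrFun h s)
      exact ⟨h2, h2', fun c hca hcb => hrank c (fun h => hca (h ▸ rfl))
        (fun h => hcb (h ▸ rfl))⟩
    · exact h.swap_tops hslice hs
  exact scEdge_marg_of_swap_tops hP hP' hslice hs h2 h2' fun d hda hdb =>
    hrank _ (by simpa using hda) (by simpa using hdb)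

end AdjEdge

def scGraph {β : Type u} (E : Set (Pref β)) : SimpleGraph β where
  Adj := scEdge E
  symm := ⟨fun _ _ ⟨hxy, Q, hQ, Q', hQ', h1, h2, h1', h2', hrest⟩ =>
    ⟨hxy.symm, Q', hQ', Q, hQ, h1', h2', h1, h2, fun z hz hz' => (hrest z hz' hz).symm⟩⟩
  loopless := ⟨fun _ h => h.1 rfl⟩

theorem exists_isPath_of_reachable {β : Type u} {G : SimpleGraph β} {x y : β}
    (h : G.Reachable x y) (hxy : x ≠ y) : ∃ l : List β, IsPath G.Adj Set.univ x y l := by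
  classical
  obtain ⟨w⟩ := h
  let p : G.Walk x y := w.toPath
  have hlen : p.length ≠ 0 := fun h => hxy (SimpleGraph.Walk.eq_of_length_eq_zero h)
  refine ⟨p.support, ?_, w.toPath.2.support_nodup, ?_, ?_, fun z _ => Set.mem_univ z,
    p.isChain_adj_support⟩
  · rw [p.length_support]; omega
  · rw [List.head?_eq_some_head p.support_ne_nil, p.head_support]
  · rw [List.getLast?_eq_some_getLast p.support_ne_nil, p.getLast_support]

theorem scGraph_reachable_of_isPath {m : ℕ} {A : Fin m → Type u}
    [∀ s, Fintype (A s)] [∀ s, Nonempty (A s)] {D : Set (Pref (∀ s, A s))} {s : Fin m}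
    {P P' : Pref (∀ s, A s)} {l : List (Pref (∀ s, A s))} (hl : IsPath AdjEdge D P P' l)
    (htops : ∀ Q ∈ l, ∀ t, t ≠ s → Q.top t = P.top t) :
    (scGraph (margDomain D s)).Reachable (P.top s) (P'.top s) := by
  obtain ⟨-, -, hhead, hlast, hmem, hchain⟩ := hl
  have hne : l ≠ [] := by rintro rfl; simp at hhead
  refine List.IsChain.induction (fun Q => (scGraph (margDomain D s)).Reachable (P.top s) (Q.top s))
    l (List.IsChain.iff_mem.1 hchain) ?_ ?_ P' (List.mem_of_getLast? hlast)
  · rintro Q Q' ⟨hQ, hQ', hadj⟩ hreach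
    rcases eq_or_ne (Q.top s) (Q'.top s) with heq | hs
    · exact heq ▸ hreach
    · have hslice : Q'.top ∈ Slice s Q.top := fun t ht =>
        (htops Q' hQ' t ht).trans (htops Q hQ t ht).symm
      exact hreach.trans (SimpleGraph.Adj.reachable (G := scGraph (margDomain D s))
        (hadj.scEdge_marg (hmem Q hQ) (hmem Q' hQ') hslice hs))
  · intro hl
    rw [List.head?_eq_some_head hl, Option.some_inj] at hhead
    rw [hhead]

theorem stmt_14_general {m : ℕ} {A : Fin m → Type u}
    [∀ s, Fintype (A s)] [∀ s, Nonempty (A s)]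
    (D : Set (Pref (∀ s, A s)))
    (hrich : RichDomain D) :
    ∀ s : Fin m, GraphConnectedOn (scEdge (margDomain D s)) Set.univ := by
  obtain ⟨hmin, -, -, hext⟩ := hrich
  intro s x _ y _ hxy
  let z : ∀ t, A t := fun t => Classical.arbitrary (A t)
  obtain ⟨P, hP, hPx⟩ := hmin (Function.update z s x)
  obtain ⟨P', hP', hPy⟩ := hmin (Function.update z s y)
  have hsim : SimilarAt P.top P'.top s := by
    rw [hPx, hPy]
    exact ⟨by simpa using hxy, fun t ht => by simp [ht]⟩
  obtain ⟨l, hl, htops⟩ := (hext P hP P' hP' fun h => hsim.1 (congrFun h s)).2 s hsim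
  have hreach := scGraph_reachable_of_isPath hl htops
  rw [hPx, hPy, Function.update_self, Function.update_self] at hreach
  exact exists_isPath_of_reachable hreach hxy

/-- On a rich decomposable domain, the graph `G_≈^{A^s}` is connected. -/
theorem stmt_14 {m : ℕ} (hm : 2 ≤ m) {A : Fin m → Type u}
    [∀ s, Fintype (A s)] [∀ s, Nonempty (A s)]
    (hcard : ∀ s, 2 ≤ Fintype.card (A s))
    (D : Set (Pref (∀ s, A s)))
    (hrich : RichDomain D)
    (hdec : DecomposableDomain D) :
    ∀ s : Fin m, GraphConnectedOn (scEdge (margDomain D s)) Set.univ :=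
  stmt_14_general D hrich
end
end

section
/- Let D be a rich domain that is a decomposable domain. Fix a linear order ≺^s on each A^s (with ≺ = ∏_s ≺^s) and, for each s ∈ M, marginal thresholds x̲^s, x̄^s ∈ A^s such that every induced marginal preference of [D]^s is hybrid on ≺^s with respect to x̲^s and x̄^s. Then every preference of D is multidimensional hybrid on ≺ with respect to the thresholds x̲ = (x̲^1,…,x̲^m) and x̄ = (x̄^1,…,x̄^m). -/
noncomputable section

universe u

/-! On a decomposable domain every product of strategy-proof unanimous marginal rules is a
strategy-proof rule, so it suffices to exhibit suitable two-voter marginal rules. For two voters,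
the generalized median with phantoms `b₁, b₂` is strategy-proof on every hybrid marginal domain as
soon as the phantoms enclose the threshold interval `Int⟨x̲ˢ, x̄ˢ⟩`: a voter then faces the
projection of his top onto an interval whose relevant endpoint lies outside `Int⟨x̲ˢ, x̄ˢ⟩`.

Given `a, b` differing only in component `s`, let voter 0 report a preference topped at `b`
(minimal richness) and voter 1 report `P`. Off `s` the phantoms make voter 0 a dictator; on `s`
they make voter 1 a dictator when `aˢ` is the top of `P`, and put a phantom at `aˢ` when `aˢ`
lies outside `Int⟨x̲ˢ, x̄ˢ⟩` between `P`'s top and `bˢ`. The outcome is then `a`, while voter 1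
reporting voter 0's preference yields `b` by unanimity, so strategy-proofness gives `a P b`. -/

open Set

namespace Pref

theorem top_eq_of_forall_rel {α : Type u} [Finite α] [Nonempty α] (P : Pref α) {a : α}
    (h : ∀ b, b ≠ a → P.rel a b) : P.top = a := by
  by_contra hne
  exact P.asymm _ _ (h _ hne) (P.top_spec a (Ne.symm hne))

theorem top_marg {m : ℕ} {A : Fin m → Type u} [∀ s, Fintype (A s)] [∀ s, Nonempty (A s)]
    (P : Pref (∀ s, A s)) (s : Fin m) : (P.marg s).top = P.top s := by
  refine top_eq_of_forall_rel _ fun y hy => ?_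
  show P.rel (Function.update P.top s (P.top s)) (Function.update P.top s y)
  rw [Function.update_eq_self]
  exact P.top_spec _ fun h => hy (by simpa using congrFun h s)

end Pref

section Interval

variable {β : Type u} [lin : LinearOrder β]

theorem sInterval_eq_uIoo (x y : β) : sInterval lin x y = uIoo x y := by
  ext z
  simp [sInterval, uIoo_eq_union]

theorem sInterval_comm (x y : β) : sInterval lin x y = sInterval lin y x := by
  simp only [sInterval_eq_uIoo, uIoo_comm]

theorem sInterval_subset_sInterval {x y c e : β} (hx : x ∈ Icc c e) (hy : y ∈ Icc c e) :
    sInterval lin x y ⊆ sInterval lin c e := by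
  rw [sInterval_eq_uIoo, sInterval_eq_uIoo]
  exact (uIoo_subset_Ioo hx hy).trans Ioo_subset_uIoo

theorem exists_sInterval_subset_of_notMem [Finite β] [Nonempty β] {x y c : β}
    (hc : c ∉ sInterval lin x y) : ∃ e, sInterval lin x y ⊆ sInterval lin c e := by
  obtain ⟨lo, hlo⟩ := Finite.exists_min (id : β → β)
  obtain ⟨hi, hhi⟩ := Finite.exists_max (id : β → β)
  rw [sInterval_eq_uIoo, uIoo, mem_Ioo, not_and_or, not_lt, not_lt] at hc
  rcases hc with hc | hc
  · exact ⟨hi, sInterval_subset_sInterval ⟨hc.trans inf_le_left, hhi x⟩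
      ⟨hc.trans inf_le_right, hhi y⟩⟩
  · refine ⟨lo, ?_⟩
    rw [sInterval_comm c]
    exact sInterval_subset_sInterval ⟨hlo x, le_sup_left.trans hc⟩
      ⟨hlo y, le_sup_right.trans hc⟩

end Interval

/-- The two-voter fixed ballot rule with ballots `⊥, b₁, b₂, ⊤` for the coalitions
`∅, {0}, {1}, {0, 1}`, i.e. the generalized median of the tops with phantoms `b₁, b₂`. -/
def phantomMedian {β : Type u} (lin : LinearOrder β) (b₁ b₂ t₁ t₂ : β) : β :=
  letI := lin
  max (min b₁ t₁) (max (min b₂ t₂) (min t₁ t₂))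

section PhantomMedian

variable {β : Type u} [lin : LinearOrder β]

theorem phantomMedian_self (b₁ b₂ t : β) : phantomMedian lin b₁ b₂ t t = t := by
  simp only [phantomMedian, min_self]
  rw [max_eq_right (min_le_right _ _), max_eq_right (min_le_right _ _)]

theorem phantomMedian_comm (b₁ b₂ t₁ t₂ : β) :
    phantomMedian lin b₁ b₂ t₁ t₂ = phantomMedian lin b₂ b₁ t₂ t₁ := by
  simp only [phantomMedian, min_comm t₂ t₁, max_left_comm]

theorem phantomMedian_eq_clamp (b₁ b₂ t₁ t₂ : β) :
    phantomMedian lin b₁ b₂ t₁ t₂ = max (min b₁ t₁) (min t₂ (max b₂ t₁)) := by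
  simp only [phantomMedian, min_max_distrib_left, min_comm]

theorem phantomMedian_eq_left_of_mem_Icc {b₁ b₂ t₁ : β} (h : t₁ ∈ Icc b₂ b₁) (t₂ : β) :
    phantomMedian lin b₁ b₂ t₁ t₂ = t₁ := by
  rw [phantomMedian, min_eq_right h.2]
  exact max_eq_left (max_le ((min_le_left _ _).trans h.1) (min_le_left _ _))

theorem phantomMedian_eq_left_phantom {c t₁ t₂ : β} (h₂ : t₂ < c) (h₁ : c < t₁) (b₂ : β) :
    phantomMedian lin c b₂ t₁ t₂ = c := by
  rw [phantomMedian, min_eq_left h₁.le, min_eq_right (h₂.trans h₁).le,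
    max_eq_right (min_le_right _ _), max_eq_left h₂.le]

theorem phantomMedian_eq_right_phantom {c t₁ t₂ : β} (h₁ : t₁ < c) (h₂ : c < t₂) (b₁ : β) :
    phantomMedian lin b₁ c t₁ t₂ = c := by
  rw [phantomMedian_comm, phantomMedian_eq_left_phantom h₁ h₂]

theorem exists_phantomMedian_eq_left [Finite β] [Nonempty β] (x y : β) :
    ∃ b₁ b₂, sInterval lin x y ⊆ sInterval lin b₁ b₂ ∧
      ∀ t₁ t₂, phantomMedian lin b₁ b₂ t₁ t₂ = t₁ := by
  obtain ⟨lo, hlo⟩ := Finite.exists_min (id : β → β)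
  obtain ⟨hi, hhi⟩ := Finite.exists_max (id : β → β)
  refine ⟨hi, lo, ?_, fun t₁ => phantomMedian_eq_left_of_mem_Icc ⟨hlo t₁, hhi t₁⟩⟩
  rw [sInterval_comm hi]
  exact sInterval_subset_sInterval ⟨hlo x, hhi x⟩ ⟨hlo y, hhi y⟩

theorem exists_phantomMedian_eq_right [Finite β] [Nonempty β] (x y : β) :
    ∃ b₁ b₂, sInterval lin x y ⊆ sInterval lin b₁ b₂ ∧
      ∀ t₁ t₂, phantomMedian lin b₁ b₂ t₁ t₂ = t₂ := by
  obtain ⟨b₁, b₂, hb, h⟩ := exists_phantomMedian_eq_left x y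
  exact ⟨b₂, b₁, hb.trans (sInterval_comm b₁ b₂).subset, fun t₁ t₂ => by
    rw [phantomMedian_comm, h]⟩

end PhantomMedian

section Hybrid

variable {β : Type u} [lin : LinearOrder β] [Finite β] [Nonempty β] {xlo xhi : β}

theorem HybridPref.rel_clamp {Q : Pref β} (hQ : HybridPref lin xlo xhi Q) {L U o : β}
    (hLU : L ≤ U) (hL : Q.top < L → L < U → L ∉ sInterval lin xlo xhi)
    (hU : U < Q.top → L < U → U ∉ sInterval lin xlo xhi) (ho : o ∈ Icc L U)
    (hne : max L (min Q.top U) ≠ o) : Q.rel (max L (min Q.top U)) o := by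
  rcases lt_or_ge Q.top L with hlt | hle
  · rw [min_eq_left (hlt.le.trans hLU), max_eq_left hlt.le] at hne ⊢
    have hLo : L < o := lt_of_le_of_ne ho.1 hne
    refine hQ L o hne ?_ (hL hlt (hLo.trans_le ho.2))
    rw [sInterval_eq_uIoo]
    exact mem_uIoo_of_lt hlt hLo
  rcases le_or_gt Q.top U with hle' | hgt
  · rw [min_eq_left hle', max_eq_right hle] at hne ⊢
    exact Q.top_spec o (Ne.symm hne)
  · rw [min_eq_right hgt.le, max_eq_right hLU] at hne ⊢
    have hoU : o < U := lt_of_le_of_ne ho.2 (Ne.symm hne)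
    refine hQ U o hne ?_ (hU hgt (ho.1.trans_lt hoU))
    rw [sInterval_eq_uIoo]
    exact mem_uIoo_of_gt hoU hgt

theorem HybridPref.rel_phantomMedian_right {b₁ b₂ : β}
    (hb : sInterval lin xlo xhi ⊆ sInterval lin b₁ b₂) {Q : Pref β}
    (hQ : HybridPref lin xlo xhi Q) (t₁ t₂ : β)
    (hne : phantomMedian lin b₁ b₂ t₁ Q.top ≠ phantomMedian lin b₁ b₂ t₁ t₂) :
    Q.rel (phantomMedian lin b₁ b₂ t₁ Q.top) (phantomMedian lin b₁ b₂ t₁ t₂) := by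
  have hout : ∀ z, z ∉ sInterval lin b₁ b₂ → z ∉ sInterval lin xlo xhi :=
    fun z hz hz' => hz (hb hz')
  have hb₁ : b₁ ∉ sInterval lin xlo xhi := hout b₁ (by simp [sInterval_eq_uIoo])
  have hb₂ : b₂ ∉ sInterval lin xlo xhi := hout b₂ (by simp [sInterval_eq_uIoo])
  rw [phantomMedian_eq_clamp, phantomMedian_eq_clamp] at hne ⊢
  refine hQ.rel_clamp ((min_le_right _ _).trans (le_max_right _ _)) (fun _ hLU => ?_)
    (fun _ hLU => ?_) ⟨le_max_left _ _, max_le ((min_le_right _ _).trans (le_max_right _ _))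
      (min_le_right _ _)⟩ hne
  -- an endpoint that is not a phantom is `t₁`, which then lies beyond both phantoms
  · rcases min_cases b₁ t₁ with ⟨h, -⟩ | ⟨h, hlt₁⟩ <;> rw [h] at hLU ⊢
    · exact hb₁
    · have hlt₂ : t₁ < b₂ := by simpa using hLU
      refine hout t₁ fun hmem => ?_
      rw [sInterval_eq_uIoo] at hmem
      exact hmem.1.not_ge (le_inf hlt₁.le hlt₂.le)
  · rcases max_cases b₂ t₁ with ⟨h, -⟩ | ⟨h, hlt₂⟩ <;> rw [h] at hLU ⊢
    · exact hb₂
    · have hlt₁ : b₁ < t₁ := by simpa using hLU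
      refine hout t₁ fun hmem => ?_
      rw [sInterval_eq_uIoo] at hmem
      exact hmem.2.not_ge (sup_le hlt₁.le hlt₂.le)

theorem HybridPref.rel_phantomMedian_left {b₁ b₂ : β}
    (hb : sInterval lin xlo xhi ⊆ sInterval lin b₁ b₂) {Q : Pref β}
    (hQ : HybridPref lin xlo xhi Q) (t₁ t₂ : β)
    (hne : phantomMedian lin b₁ b₂ Q.top t₂ ≠ phantomMedian lin b₁ b₂ t₁ t₂) :
    Q.rel (phantomMedian lin b₁ b₂ Q.top t₂) (phantomMedian lin b₁ b₂ t₁ t₂) := by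
  rw [phantomMedian_comm, phantomMedian_comm b₁] at hne ⊢
  exact hQ.rel_phantomMedian_right (hb.trans (sInterval_comm b₁ b₂).subset) t₂ t₁ hne

variable {E : Set (Pref β)} {b₁ b₂ : β}

theorem unanimous_phantomMedian :
    Unanimous E fun q : Fin 2 → E => phantomMedian lin b₁ b₂ (q 0).1.top (q 1).1.top := by
  intro q a ha
  dsimp only
  rw [ha 0, ha 1, phantomMedian_self]

theorem strategyProof_phantomMedian (hE : ∀ Q ∈ E, HybridPref lin xlo xhi Q)
    (hb : sInterval lin xlo xhi ⊆ sInterval lin b₁ b₂) :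
    StrategyProof E fun q : Fin 2 → E => phantomMedian lin b₁ b₂ (q 0).1.top (q 1).1.top := by
  intro q i Q hne
  fin_cases i
  · simp only [Fin.zero_eta, Function.update_self, Function.update_of_ne one_ne_zero] at hne ⊢
    exact (hE _ (q 0).2).rel_phantomMedian_left hb _ _ hne
  · simp only [Fin.mk_one, Function.update_self, Function.update_of_ne zero_ne_one] at hne ⊢
    exact (hE _ (q 1).2).rel_phantomMedian_right hb _ _ hne

end Hybrid

section Product

variable {m : ℕ} {A : Fin m → Type u} [∀ s, Fintype (A s)] [∀ s, Nonempty (A s)]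
  {D : Set (Pref (∀ s, A s))} {prec : ∀ s, LinearOrder (A s)} {xlo xhi : ∀ s, A s}

theorem rel_of_forall_eq_phantomMedian (hdec : DecomposableDomain D) (hmr : MinimallyRich D)
    (hhyb : ∀ s, ∀ Q ∈ margDomain D s, HybridPref (prec s) (xlo s) (xhi s) Q)
    {b₁ b₂ : ∀ s, A s}
    (hb : ∀ s, sInterval (prec s) (xlo s) (xhi s) ⊆ sInterval (prec s) (b₁ s) (b₂ s))
    {P : Pref (∀ s, A s)} (hP : P ∈ D) {a b : ∀ s, A s} (hab : a ≠ b)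
    (ha : ∀ s, a s = phantomMedian (prec s) (b₁ s) (b₂ s) (b s) (P.top s)) : P.rel a b := by
  obtain ⟨Q, hQ, rfl⟩ := hmr b
  let g : ∀ s, (Fin 2 → margDomain D s) → A s := fun s q =>
    phantomMedian (prec s) (b₁ s) (b₂ s) (q 0).1.top (q 1).1.top
  let f : (Fin 2 → D) → ∀ s, A s := fun p s => g s (margProfile D s p)
  have hsp : StrategyProof D f := ((hdec 2 le_rfl f).mpr ⟨g, fun _ _ => rfl, fun s =>
    ⟨unanimous_phantomMedian, strategyProof_phantomMedian (hhyb s) (hb s)⟩⟩).2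
  let p : Fin 2 → D := ![⟨Q, hQ⟩, ⟨P, hP⟩]
  have htruth : f p = a := funext fun s => by
    simp [f, g, p, margProfile, Pref.top_marg, ha]
  have hlie : f (Function.update p 1 ⟨Q, hQ⟩) = Q.top := funext fun s => by
    simp [f, g, p, margProfile, Pref.top_marg, phantomMedian_self]
  simpa [htruth, hlie, p] using hsp p 1 ⟨Q, hQ⟩ (by rwa [htruth, hlie])

theorem rel_of_eq_phantomMedian (hdec : DecomposableDomain D) (hmr : MinimallyRich D)
    (hhyb : ∀ s, ∀ Q ∈ margDomain D s, HybridPref (prec s) (xlo s) (xhi s) Q)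
    {P : Pref (∀ s, A s)} (hP : P ∈ D) {s : Fin m} {a b : ∀ t, A t} (hab : SimilarAt a b s)
    {c₁ c₂ : A s} (hc : sInterval (prec s) (xlo s) (xhi s) ⊆ sInterval (prec s) c₁ c₂)
    (ha : a s = phantomMedian (prec s) c₁ c₂ (b s) (P.top s)) : P.rel a b := by
  choose b₁ b₂ hb hdict using fun t =>
    @exists_phantomMedian_eq_left _ (prec t) _ _ (xlo t) (xhi t)
  refine rel_of_forall_eq_phantomMedian hdec hmr hhyb (b₁ := Function.update b₁ s c₁)
    (b₂ := Function.update b₂ s c₂) (fun t => ?_) hP (fun h => hab.1 (congrFun h s))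
    (fun t => ?_)
  · rcases eq_or_ne t s with rfl | ht
    · simpa using hc
    · simpa [ht] using hb t
  · rcases eq_or_ne t s with rfl | ht
    · simpa using ha
    · simp [ht, hdict, hab.2 t ht]

end Product

theorem stmt_15_general {m : ℕ} {A : Fin m → Type u}
    [∀ s, Fintype (A s)] [∀ s, Nonempty (A s)]
    (D : Set (Pref (∀ s, A s)))
    (hrich : RichDomain D)
    (hdec : DecomposableDomain D)
    (prec : ∀ s, LinearOrder (A s)) (xlo xhi : ∀ s, A s)
    (hhyb : ∀ s, ∀ Q ∈ margDomain D s, HybridPref (prec s) (xlo s) (xhi s) Q) :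
    ∀ P ∈ D, MDHybrid prec xlo xhi P := by
  intro P hP s a b hab
  have key := fun c₁ c₂ => rel_of_eq_phantomMedian (c₁ := c₁) (c₂ := c₂) hdec hrich.1 hhyb hP hab
  let _ := prec s
  refine ⟨fun htop => ?_, fun hmem hnot => ?_⟩
  · obtain ⟨c₁, c₂, hc, hdict⟩ := exists_phantomMedian_eq_right (xlo s) (xhi s)
    exact key _ _ hc (by rw [hdict, htop])
  · obtain ⟨e, he⟩ := exists_sInterval_subset_of_notMem hnot
    rw [sInterval_eq_uIoo, uIoo_eq_union] at hmem
    rcases hmem with ⟨h₁, h₂⟩ | ⟨h₁, h₂⟩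
    · exact key _ _ he (phantomMedian_eq_left_phantom h₁ h₂ e).symm
    · exact key _ _ (he.trans (sInterval_comm _ _).subset)
        (phantomMedian_eq_right_phantom h₁ h₂ e).symm

/-- On a rich decomposable domain, if all induced marginal preferences
are hybrid w.r.t. the marginal thresholds, then every preference of the domain is
multidimensional hybrid w.r.t. the assembled thresholds. -/
theorem stmt_15 {m : ℕ} (hm : 2 ≤ m) {A : Fin m → Type u}
    [∀ s, Fintype (A s)] [∀ s, Nonempty (A s)]
    (hcard : ∀ s, 2 ≤ Fintype.card (A s))
    (D : Set (Pref (∀ s, A s)))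
    (hrich : RichDomain D)
    (hdec : DecomposableDomain D)
    (prec : ∀ s, LinearOrder (A s)) (xlo xhi : ∀ s, A s)
    (hth : Thresholds prec xlo xhi)
    (hhyb : ∀ s, ∀ Q ∈ margDomain D s, HybridPref (prec s) (xlo s) (xhi s) Q) :
    ∀ P ∈ D, MDHybrid prec xlo xhi P :=
  stmt_15_general D hrich hdec prec xlo xhi hhyb
end
end

section
/- Fix a linear order ≺^s on each A^s and define thresholds x̲, x̄ ∈ A as follows: for each s ∈ M, if |A^s| = 2 then x̲^s = x̄^s is an arbitrary element of A^s, and if |A^s| ≥ 3 then x̲^s = min^{≺^s}(A^s) and x̄^s = max^{≺^s}(A^s). Then the separable domain D_S, consisting of all separable preferences on A, is a multidimensional hybrid domain on ≺ = ∏_s ≺^s with respect to x̲ and x̄: every separable preference is multidimensional hybrid on ≺ w.r.t. x̲, x̄, the induced marginal domain [D_S]^s equals the set of all linear orders on A^s for every s ∈ M, the graph G_≈^{A^s} is connected for every s, and for every s with x̲^s ≠ x̄^s the graph G_≈^{⟨x̲^s, x̄^s⟩} has no leaf. -/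
noncomputable section

universe u

/-!
Lexicographic combinations of arbitrary marginal orders are separable and induce any prescribed
marginal, so every induced marginal domain of `D_S` is the full domain of linear orders. There any
two alternatives are strongly connected (put one first and the other second, then swap them), so
each graph `G_≈` is complete: connected, and without leaves once it has three vertices.
Separability forces the marginal order to rank the top's component first, which is clause (i) of
hybridity. Clause (ii) is vacuous: an element strictly between two others exists only when
`|A^s| ≥ 3`, and it then lies strictly between the thresholds `min` and `max`.
-/

namespace Pref

variable {β : Type u}

theorem ext {P Q : Pref β} (h : P.rel = Q.rel) : P = Q := by
  cases P; cases Q; cases h; rfl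

theorem irrefl (P : Pref β) (a : β) : ¬ P.rel a a := fun h => P.asymm a a h h

def ofLinearOrder (lin : LinearOrder β) : Pref β :=
  letI := lin
  { rel := (· < ·)
    asymm := fun _ _ => lt_asymm
    trans := fun _ _ _ => lt_trans
    total := fun _ _ => lt_or_gt_of_ne }

abbrev toLinearOrder (P : Pref β) : LinearOrder β :=
  haveI : IsStrictTotalOrder β P.rel :=
    { irrefl := P.irrefl
      trans := P.trans
      trichotomous := fun a b hab hba => by
        by_contra h
        exact (P.total a b h).elim hab hba }
  haveI := Classical.decRel P.rel
  linearOrderOfSTO P.rel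

instance : Nonempty (Pref β) := by
  obtain ⟨lin, -⟩ := exists_wellFoundedLT β
  exact ⟨ofLinearOrder lin⟩

def moveToTop (P : Pref β) (x : β) : Pref β where
  rel a b := b ≠ x ∧ (a = x ∨ P.rel a b)
  asymm a b := by
    rintro ⟨hb, ha | hab⟩ ⟨ha', hb' | hba⟩
    exacts [ha' ha, ha' ha, hb hb', P.asymm a b hab hba]
  trans a b c := by
    rintro ⟨hb, ha | hab⟩ ⟨hc, hb' | hbc⟩
    exacts [⟨hc, Or.inl ha⟩, ⟨hc, Or.inl ha⟩, (hb hb').elim,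
      ⟨hc, Or.inr (P.trans a b c hab hbc)⟩]
  total a b hab := by
    by_cases ha : a = x
    · exact Or.inl ⟨fun hb => hab (ha.trans hb.symm), Or.inl ha⟩
    by_cases hb : b = x
    · exact Or.inr ⟨ha, Or.inl hb⟩
    exact (P.total a b hab).imp (fun h => ⟨hb, Or.inr h⟩) fun h => ⟨ha, Or.inr h⟩

theorem rank_moveToTop_self (P : Pref β) (x : β) : (P.moveToTop x).rank x = 1 := by
  simp [rank, moveToTop]

theorem rank_moveToTop_moveToTop {x y : β} (hxy : x ≠ y) (P : Pref β) :
    ((P.moveToTop y).moveToTop x).rank y = 2 := by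
  have : {b | ((P.moveToTop y).moveToTop x).rel b y} = {x} := by
    ext b
    simp [moveToTop, hxy.symm]
  simp [rank, this]

end Pref

theorem stronglyConnected_univ {β : Type u} {x y : β} (hxy : x ≠ y) :
    StronglyConnected (Set.univ : Set (Pref β)) x y := by
  obtain ⟨P⟩ := (inferInstance : Nonempty (Pref β))
  refine ⟨(P.moveToTop y).moveToTop x, trivial, (P.moveToTop x).moveToTop y, trivial,
    Pref.rank_moveToTop_self _ x, Pref.rank_moveToTop_moveToTop hxy P,
    Pref.rank_moveToTop_self _ y, Pref.rank_moveToTop_moveToTop hxy.symm P, fun z hzx hzy => ?_⟩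
  have : {b | ((P.moveToTop y).moveToTop x).rel b z} =
      {b | ((P.moveToTop x).moveToTop y).rel b z} := by
    ext b
    simp only [Pref.moveToTop, Set.mem_ofPred_eq]
    tauto
  rw [Pref.rank, Pref.rank, this]

theorem pairwise_scEdge_univ {β : Type u} :
    (Set.univ : Set β).Pairwise (scEdge (Set.univ : Set (Pref β))) :=
  fun _ _ _ _ hxy => ⟨hxy, stronglyConnected_univ hxy⟩

section Graph

variable {β : Type u} {edge : β → β → Prop} {B : Set β}

theorem graphConnectedOn_of_pairwise (h : B.Pairwise edge) : GraphConnectedOn edge B :=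
  fun x hx y hy hxy =>
    ⟨[x, y], le_rfl, by simp [hxy], rfl, rfl, by simp [hx, hy],
      List.isChain_pair.2 (h hx hy hxy)⟩

theorem not_isLeaf_of_pairwise (h : B.Pairwise edge) (hB : 2 < B.ncard) (v : β) :
    ¬ IsLeaf edge B v := by
  rintro ⟨hv, w, -, huniq⟩
  have hfin : B.Finite := Set.finite_of_ncard_pos (by omega)
  have : 1 < (B \ {v}).ncard := by
    rw [Set.ncard_sdiff_singleton_of_mem hv]
    omega
  obtain ⟨a, b, ⟨ha, hav⟩, ⟨hb, hbv⟩, hab⟩ := (Set.one_lt_ncard_iff hfin.sdiff).1 this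
  exact hab ((huniq a ⟨ha, h hv ha (Ne.symm hav)⟩).trans
    (huniq b ⟨hb, h hv hb (Ne.symm hbv)⟩).symm)

end Graph

section Extremes

variable {β : Type u} [Fintype β] [lin : LinearOrder β]

theorem three_le_card_of_mem_sInterval {x y c : β} (h : c ∈ sInterval lin x y) :
    3 ≤ Fintype.card β := by
  obtain ⟨hxc, hcy⟩ | ⟨hyc, hcx⟩ := h
  · simpa [hxc.ne, hcy.ne, (hxc.trans hcy).ne] using Finset.card_le_univ {x, c, y}
  · simpa [hyc.ne, hcx.ne, (hyc.trans hcx).ne] using Finset.card_le_univ {y, c, x}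

variable [Nonempty β]

theorem wInterval_min'_max' :
    wInterval lin (Finset.univ.min' Finset.univ_nonempty) (Finset.univ.max' Finset.univ_nonempty)
      = Set.univ :=
  Set.eq_univ_of_forall fun _ =>
    Or.inl ⟨Finset.min'_le _ _ (Finset.mem_univ _), Finset.le_max' _ _ (Finset.mem_univ _)⟩

theorem sInterval_subset_sInterval_min'_max' (x y : β) :
    sInterval lin x y ⊆ sInterval lin (Finset.univ.min' Finset.univ_nonempty)
      (Finset.univ.max' Finset.univ_nonempty) := by
  have hmin (z : β) := Finset.min'_le Finset.univ z (Finset.mem_univ z)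
  have hmax (z : β) := Finset.le_max' Finset.univ z (Finset.mem_univ z)
  rintro c (⟨hxc, hcy⟩ | ⟨hyc, hcx⟩)
  exacts [Or.inl ⟨(hmin x).trans_lt hxc, hcy.trans_le (hmax y)⟩,
    Or.inl ⟨(hmin y).trans_lt hyc, hcx.trans_le (hmax x)⟩]

theorem marginalThresholds_min'_max' (h : 3 ≤ Fintype.card β) :
    MarginalThresholds lin (Finset.univ.min' Finset.univ_nonempty)
      (Finset.univ.max' Finset.univ_nonempty) := by
  refine Or.inr ⟨(Finset.min'_lt_max'_of_card _ ?_).ne, ?_⟩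
  · rw [Finset.card_univ]; omega
  · rwa [wInterval_min'_max', Set.ncard_univ, Nat.card_eq_fintype_card]

end Extremes

section Separable

variable {m : ℕ} {A : Fin m → Type u}

def Pref.lex (Q : ∀ s, Pref (A s)) : Pref (∀ s, A s) :=
  letI := fun s => (Q s).toLinearOrder
  Pref.ofLinearOrder (inferInstance : LinearOrder (Lex (∀ s, A s)))

theorem Pref.lex_rel_iff (Q : ∀ s, Pref (A s)) (a b : ∀ s, A s) :
    (Pref.lex Q).rel a b ↔ ∃ i, (∀ j, j < i → a j = b j) ∧ (Q i).rel (a i) (b i) :=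
  Iff.rfl

theorem Pref.lex_rel_update_iff (Q : ∀ s, Pref (A s)) (z : ∀ s, A s) (s : Fin m) (x y : A s) :
    (Pref.lex Q).rel (Function.update z s x) (Function.update z s y) ↔ (Q s).rel x y := by
  rw [Pref.lex_rel_iff]
  constructor
  · rintro ⟨i, -, hi⟩
    by_cases his : i = s
    · subst his
      simpa using hi
    · simp only [Function.update_of_ne his] at hi
      exact ((Q i).irrefl _ hi).elim
  · intro h
    exact ⟨s, fun j hj => by simp [hj.ne], by simpa using h⟩

theorem Pref.separable_lex (Q : ∀ s, Pref (A s)) : Separable (Pref.lex Q) :=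
  ⟨Q, fun s _ _ hab h => ⟨s, fun j hj => hab.2 j hj.ne, h⟩⟩

variable [∀ s, Fintype (A s)] [∀ s, Nonempty (A s)]

theorem Pref.marg_lex (Q : ∀ s, Pref (A s)) (s : Fin m) : (Pref.lex Q).marg s = Q s :=
  Pref.ext <| funext₂ fun x y => propext (Pref.lex_rel_update_iff Q _ s x y)

theorem margDomain_separable (s : Fin m) :
    margDomain {P : Pref (∀ s, A s) | Separable P} s = Set.univ :=
  Set.eq_univ_of_forall fun Q =>
    ⟨Pref.lex (Function.update (fun _ => Classical.arbitrary _) s Q), Pref.separable_lex _,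
      (Pref.marg_lex _ s).trans (Function.update_self ..)⟩

theorem Separable.topSeparable {P : Pref (∀ s, A s)} (hP : Separable P) : TopSeparable P := by
  obtain ⟨Q, hQ⟩ := hP
  -- otherwise moving the top along `s` would produce a better alternative
  have htop : ∀ s y, y ≠ P.top s → (Q s).rel (P.top s) y := by
    intro s y hy
    refine ((Q s).total _ _ hy.symm).resolve_right fun hyQ =>
      P.asymm _ _ (P.top_spec (Function.update P.top s y) ?_) (hQ s _ _ ?_ (by simpa using hyQ))
    · exact fun h => hy (by simpa using congrFun h s)
    · exact ⟨by simpa using hy, fun t ht => Function.update_of_ne ht _ _⟩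
  intro s a b hab ha
  exact hQ s a b hab (ha ▸ htop s (b s) (ha ▸ hab.1.symm))

theorem TopSeparable.mdHybrid {prec : ∀ s, LinearOrder (A s)} {xlo xhi : ∀ s, A s}
    {P : Pref (∀ s, A s)} (hP : TopSeparable P)
    (hint : ∀ s (x y : A s), sInterval (prec s) x y ⊆ sInterval (prec s) (xlo s) (xhi s)) :
    MDHybrid prec xlo xhi P :=
  fun s a b hab => ⟨hP s a b hab, fun hmem hnot => (hnot (hint s _ _ hmem)).elim⟩

end Separable

theorem stmt_18_general {m : ℕ} {A : Fin m → Type u}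
    [∀ s, Fintype (A s)] [∀ s, Nonempty (A s)]
    (prec : ∀ s, LinearOrder (A s)) (xlo xhi : ∀ s, A s)
    (h2 : ∀ s, Fintype.card (A s) = 2 → xlo s = xhi s)
    (h3 : ∀ s, 3 ≤ Fintype.card (A s) →
      xlo s = @Finset.min' (A s) (prec s) Finset.univ Finset.univ_nonempty ∧
      xhi s = @Finset.max' (A s) (prec s) Finset.univ Finset.univ_nonempty) :
    MDHybridDomain {P : Pref (∀ s, A s) | Separable P} prec xlo xhi ∧
    ∀ s, margDomain {P : Pref (∀ s, A s) | Separable P} s = Set.univ := by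
  have hcard : ∀ s, xlo s ≠ xhi s → 3 ≤ Fintype.card (A s) := fun s hne => by
    have := Fintype.one_lt_card_iff.2 ⟨_, _, hne⟩
    have := mt (h2 s) hne
    omega
  refine ⟨⟨fun s => ?_, fun P hP => ?_, fun s => ⟨?_, fun hne => ?_⟩⟩,
    margDomain_separable⟩
  · by_cases hne : xlo s = xhi s
    · exact Or.inl hne
    obtain ⟨hlo, hhi⟩ := h3 s (hcard s hne)
    rw [hlo, hhi]
    exact marginalThresholds_min'_max' (hcard s hne)
  · refine hP.topSeparable.mdHybrid fun s x y c hc => ?_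
    obtain ⟨hlo, hhi⟩ := h3 s (three_le_card_of_mem_sInterval (lin := prec s) hc)
    rw [hlo, hhi]
    exact sInterval_subset_sInterval_min'_max' x y hc
  · rw [margDomain_separable]
    exact graphConnectedOn_of_pairwise pairwise_scEdge_univ
  · obtain ⟨hlo, hhi⟩ := h3 s (hcard s hne)
    rw [margDomain_separable, hlo, hhi, wInterval_min'_max']
    refine not_isLeaf_of_pairwise pairwise_scEdge_univ ?_
    rw [Set.ncard_univ, Nat.card_eq_fintype_card]
    exact hcard s hne

/-- the separable domain is a multidimensional hybrid domain for the
indicated thresholds, with full induced marginal domains. -/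
theorem stmt_18 {m : ℕ} (hm : 2 ≤ m) {A : Fin m → Type u}
    [∀ s, Fintype (A s)] [∀ s, Nonempty (A s)]
    (hcard : ∀ s, 2 ≤ Fintype.card (A s))
    (prec : ∀ s, LinearOrder (A s)) (xlo xhi : ∀ s, A s)
    (h2 : ∀ s, Fintype.card (A s) = 2 → xlo s = xhi s)
    (h3 : ∀ s, 3 ≤ Fintype.card (A s) →
      xlo s = @Finset.min' (A s) (prec s) Finset.univ Finset.univ_nonempty ∧
      xhi s = @Finset.max' (A s) (prec s) Finset.univ Finset.univ_nonempty) :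
    MDHybridDomain {P : Pref (∀ s, A s) | Separable P} prec xlo xhi ∧
    ∀ s, margDomain {P : Pref (∀ s, A s) | Separable P} s = Set.univ :=
  stmt_18_general prec xlo xhi h2 h3
end
end
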